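/- arXiv:2205.06235 — 6 statements merged into one kernel-verified Lean document; each statement's English description precedes it below -/
import Mathlib

section
/- The only solutions in positive integers (x, n) of the Diophantine equation x² + 2 = 3ⁿ are (x, n) = (1, 1) and (x, n) = (5, 3). -/
/-!
Writing `n = 2m + 1` (an even `n` would make `x² + 2` a square), the equation becomes
`x² + 2 = 3y²` with `y = 3^m`. Multiplication by the unit `2 + √3` of `ℤ[√3]` permutes the
solutions `x + y√3` of this norm equation, and a descent shows that every solution in natural
numbers is `(1 + √3)(2 + √3)^k` for some `k`. Reducing the orbit modulo `9` and modulo `17`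
(where it has period `18`) shows that `9 ∣ y` and `17 ∣ y` both happen exactly when `k ≡ 4 mod 9`.
Hence a power of `3` can only be a `y`-coordinate if it is `1` or `3`.
-/

open Function

/-- Multiplication of `x + y√3` by `2 + √3`. -/
def pellStep {R : Type*} [Semiring R] (p : R × R) : R × R :=
  (2 * p.1 + 3 * p.2, p.1 + 2 * p.2)

lemma map_pellStep {R S : Type*} [Semiring R] [Semiring S] (f : R →+* S) (p : R × R) :
    Prod.map f f (pellStep p) = pellStep (Prod.map f f p) := by
  simp [pellStep, map_ofNat]

lemma natCast_snd_iterate_pellStep {R : Type*} [Semiring R] (k : ℕ) :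
    ((pellStep^[k] ((1, 1) : ℕ × ℕ)).2 : R) = (pellStep^[k] ((1, 1) : R × R)).2 := by
  have hconj : Semiconj (Prod.map (Nat.castRingHom R) (Nat.castRingHom R)) pellStep pellStep :=
    map_pellStep _
  simpa using congrArg Prod.snd (hconj.iterate_right k (1, 1))

lemma exists_pellStep_eq_of_two_le {x y : ℕ} (h : x ^ 2 + 2 = 3 * y ^ 2) (hy : 2 ≤ y) :
    ∃ a b, a ^ 2 + 2 = 3 * b ^ 2 ∧ b < y ∧ pellStep (a, b) = (x, y) := by
  have hxy : y < x := by nlinarith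
  have hx2y : x < 2 * y := by nlinarith
  have h3y : 3 * y < 2 * x := by nlinarith
  refine ⟨2 * x - 3 * y, 2 * y - x, ?_, by omega, ?_⟩
  · have hℤ : (x : ℤ) ^ 2 + 2 = 3 * (y : ℤ) ^ 2 := by exact_mod_cast h
    zify [h3y.le, hx2y.le]
    linear_combination hℤ
  · simp only [pellStep, Prod.mk.injEq]
    omega

lemma exists_iterate_pellStep_eq {x y : ℕ} (h : x ^ 2 + 2 = 3 * y ^ 2) :
    ∃ k, pellStep^[k] (1, 1) = (x, y) := by
  induction y using Nat.strong_induction_on generalizing x with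
  | _ y ih =>
  obtain hy | hy : y ≤ 1 ∨ 2 ≤ y := by omega
  · interval_cases y
    · omega
    · obtain rfl : x = 1 := by simpa using h
      exact ⟨0, rfl⟩
  · obtain ⟨a, b, hab, hby, hstep⟩ := exists_pellStep_eq_of_two_le h hy
    obtain ⟨k, hk⟩ := ih b hby hab
    exact ⟨k + 1, by rw [iterate_succ_apply', hk, hstep]⟩

lemma dvd_snd_iterate_pellStep_iff {p : ℕ}
    (hper : IsPeriodicPt pellStep 18 ((1, 1) : ZMod p × ZMod p))
    (hzero : ∀ k < 18, (pellStep^[k] ((1, 1) : ZMod p × ZMod p)).2 = 0 ↔ k % 9 = 4) (k : ℕ) :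
    p ∣ (pellStep^[k] ((1, 1) : ℕ × ℕ)).2 ↔ k % 9 = 4 := by
  rw [← ZMod.natCast_eq_zero_iff, natCast_snd_iterate_pellStep, ← hper.iterate_mod_apply,
    hzero _ (Nat.mod_lt _ (by norm_num)), Nat.mod_mod_of_dvd _ (by norm_num)]

lemma nine_dvd_snd_iterate_pellStep_iff (k : ℕ) :
    9 ∣ (pellStep^[k] ((1, 1) : ℕ × ℕ)).2 ↔ k % 9 = 4 :=
  dvd_snd_iterate_pellStep_iff (by decide) (by decide) k

lemma seventeen_dvd_snd_iterate_pellStep_iff (k : ℕ) :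
    17 ∣ (pellStep^[k] ((1, 1) : ℕ × ℕ)).2 ↔ k % 9 = 4 :=
  dvd_snd_iterate_pellStep_iff (by decide) (by decide) k

lemma odd_of_sq_add_two_eq_three_pow {x n : ℕ} (h : x ^ 2 + 2 = 3 ^ n) : Odd n := by
  by_contra hn
  obtain ⟨m, rfl⟩ := Nat.not_odd_iff_even.mp hn
  rw [← two_mul, pow_mul'] at h
  generalize 3 ^ m = z at h
  have hlt : x < z := by nlinarith
  obtain rfl : z = x + 1 := le_antisymm (by nlinarith) hlt
  ring_nf at h
  omega

theorem stmt1_general (x n : ℕ) :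
    x ^ 2 + 2 = 3 ^ n ↔ (x = 1 ∧ n = 1) ∨ (x = 5 ∧ n = 3) := by
  refine ⟨fun h => ?_, by rintro (⟨rfl, rfl⟩ | ⟨rfl, rfl⟩) <;> norm_num⟩
  obtain ⟨m, rfl⟩ := odd_of_sq_add_two_eq_three_pow h
  have hpell : x ^ 2 + 2 = 3 * (3 ^ m) ^ 2 := by rw [h]; ring
  obtain ⟨k, hk⟩ := exists_iterate_pellStep_eq hpell
  have hm : m < 2 := by
    by_contra! hm
    have h9 : 9 ∣ (pellStep^[k] ((1, 1) : ℕ × ℕ)).2 := by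
      rw [hk]
      simpa using Nat.pow_dvd_pow 3 hm
    have h17 := (seventeen_dvd_snd_iterate_pellStep_iff k).mpr
      ((nine_dvd_snd_iterate_pellStep_iff k).mp h9)
    rw [hk] at h17
    have h17_dvd_3 := (by norm_num : Nat.Prime 17).dvd_of_dvd_pow h17
    norm_num at h17_dvd_3
  interval_cases m
  · left
    exact ⟨by simpa using hpell, rfl⟩
  · right
    refine ⟨?_, rfl⟩
    have hx : x ^ 2 = 5 ^ 2 := by omega
    exact Nat.pow_left_injective two_ne_zero hx

theorem stmt1 (x n : ℕ) (hx : 0 < x) (hn : 0 < n) :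
    x ^ 2 + 2 = 3 ^ n ↔ (x = 1 ∧ n = 1) ∨ (x = 5 ∧ n = 3) :=
  stmt1_general x n
end

section
/- The only solutions in positive integers (x, n) of the Diophantine equation x² + 4 = 5ⁿ are (x, n) = (1, 1) and (x, n) = (11, 3). -/
/-!
For even `n`, `x ^ 2 + 4` would be a square, which only happens at `x = 0`. For `n = 2k + 1`,
`(x, 5 ^ k)` solves `x ^ 2 + 4 = 5 u ^ 2`, whose solutions in naturals are the pairs
`(L (2j+1), F (2j+1))` of Lucas and Fibonacci numbers, by descent. So `F (2j+1) = 5 ^ k`.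
Now `5 ∣ F m` forces `5 ∣ m`, and for odd `m` we have `F (5m) = 5 F m (5 F m ^ 4 - 5 F m ^ 2 + 1)`,
where the last factor is `≡ 1 mod 5` and hence equal to `1`; this leaves `2j + 1 ∈ {1, 5}`.
-/

open Nat

theorem fib_add_one_sq_sub_mul_sub_sq (n : ℕ) :
    (fib (n + 1) : ℤ) ^ 2 - fib (n + 1) * fib n - fib n ^ 2 = (-1) ^ n := by
  induction n with
  | zero => simp
  | succ n ih =>
    rw [fib_add_two, pow_succ]
    push_cast
    linear_combination -ih

theorem fib_five_mul_and_fib_five_mul_add_one (n : ℕ) :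
    (fib (5 * n) : ℤ) = 5 * fib n * fib (n + 1) ^ 4 - 10 * fib n ^ 2 * fib (n + 1) ^ 3
      + 20 * fib n ^ 3 * fib (n + 1) ^ 2 - 15 * fib n ^ 4 * fib (n + 1) + 5 * fib n ^ 5 ∧
    (fib (5 * n + 1) : ℤ) = fib (n + 1) ^ 5 + 10 * fib n ^ 2 * fib (n + 1) ^ 3
      - 10 * fib n ^ 3 * fib (n + 1) ^ 2 + 10 * fib n ^ 4 * fib (n + 1) - 3 * fib n ^ 5 := by
  induction n with
  | zero => simp
  | succ n ih =>
    obtain ⟨ih₀, ih₁⟩ := ih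
    rw [show 5 * (n + 1) = 5 * n + 5 by ring]
    simp only [fib_add_two]
    push_cast
    exact ⟨by linear_combination 3 * ih₀ + 5 * ih₁, by linear_combination 5 * ih₀ + 8 * ih₁⟩

theorem fib_five_mul (n : ℕ) :
    (fib (5 * n) : ℤ) = fib n * (25 * fib n ^ 4 + 25 * (-1) ^ n * fib n ^ 2 + 5) := by
  have hsq : ((-1 : ℤ) ^ n) ^ 2 = 1 := by rw [← pow_mul, pow_mul', neg_one_sq, one_pow]
  rw [(fib_five_mul_and_fib_five_mul_add_one n).1]
  linear_combination (5 * (fib n : ℤ) * ((fib (n + 1) : ℤ) ^ 2 - fib (n + 1) * fib n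
    - fib n ^ 2 + (-1) ^ n) + 25 * fib n ^ 3) * fib_add_one_sq_sub_mul_sub_sq n + 5 * fib n * hsq

theorem le_two_of_fib_le_one {n : ℕ} (h : fib n ≤ 1) : n ≤ 2 := by
  by_contra! hn
  have : 2 ≤ fib n := fib_mono hn
  omega

theorem five_dvd_of_five_dvd_fib {n : ℕ} (h : 5 ∣ fib n) : 5 ∣ n := by
  have hgcd : fib (Nat.gcd n 5) = 5 := by
    rw [fib_gcd, show fib 5 = 5 from rfl, Nat.gcd_eq_right h]
  rcases (dvd_prime (by norm_num)).1 (Nat.gcd_dvd_right n 5) with h1 | h5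
  · simp [h1] at hgcd
  · exact h5 ▸ Nat.gcd_dvd_left n 5

theorem le_one_of_dvd_five_pow {a m : ℕ} (h : (5 * a ^ 4 - 5 * a ^ 2 + 1 : ℤ) ∣ 5 ^ m) :
    a ≤ 1 := by
  have hcop : IsCoprime (5 * a ^ 4 - 5 * a ^ 2 + 1 : ℤ) 5 := ⟨1, a ^ 2 - a ^ 4, by ring⟩
  have hunit := Int.isUnit_iff.1 ((hcop.pow_right (n := m)).isUnit_of_dvd' dvd_rfl h)
  by_contra! ha
  have ha2 : (4 : ℤ) ≤ a ^ 2 := by nlinarith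
  have ha4 : 4 * (a : ℤ) ^ 2 ≤ a ^ 4 := by nlinarith
  omega

theorem eq_one_or_five_of_fib_eq_five_pow {n m : ℕ} (hn : Odd n) (h : fib n = 5 ^ m) :
    n = 1 ∨ n = 5 := by
  rcases m with _ | m
  · obtain ⟨i, rfl⟩ := hn
    have := le_two_of_fib_le_one h.le
    omega
  · obtain ⟨k, rfl⟩ := five_dvd_of_five_dvd_fib (h ▸ dvd_pow_self 5 m.succ_ne_zero)
    have hk : Odd k := hn.of_mul_right
    have hfac := fib_five_mul k
    rw [hk.neg_one_pow, h] at hfac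
    have hdvd : (5 * fib k ^ 4 - 5 * fib k ^ 2 + 1 : ℤ) ∣ 5 ^ (m + 1) :=
      ⟨5 * fib k, by push_cast at hfac; linear_combination hfac⟩
    obtain ⟨i, rfl⟩ := hk
    have := le_two_of_fib_le_one (le_one_of_dvd_five_pow hdvd)
    omega

theorem exists_lt_of_sq_add_four_eq_five_mul_sq {x u : ℕ} (h : x ^ 2 + 4 = 5 * u ^ 2)
    (hu : 2 ≤ u) :
    ∃ X U : ℕ, X ^ 2 + 4 = 5 * U ^ 2 ∧ U < u ∧ 2 * x = 3 * X + 5 * U ∧ 2 * u = X + 3 * U := by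
  -- `(X + U √5) / 2` is `(x + u √5) / 2` divided by the unit `φ ^ 2 = (3 + √5) / 2`.
  have hpar : Even x ↔ Even u := by
    simpa [Nat.even_add, Nat.even_mul, parity_simps] using congrArg Even h
  rw [even_iff, even_iff] at hpar
  have hux : u < x := by nlinarith
  have hx3u : x < 3 * u := by nlinarith
  have h5u : 5 * u ≤ 3 * x := by nlinarith
  obtain ⟨X, hX⟩ : ∃ X, 3 * x = 5 * u + 2 * X := ⟨(3 * x - 5 * u) / 2, by omega⟩
  obtain ⟨U, hU⟩ : ∃ U, x + 2 * U = 3 * u := ⟨(3 * u - x) / 2, by omega⟩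
  refine ⟨X, U, ?_, by omega, by omega, by omega⟩
  have h4 : 4 * (X ^ 2 + 4) = 4 * (5 * U ^ 2) := by
    zify at h hX hU ⊢
    linear_combination 4 * h - (2 * X + 3 * x - 5 * u) * hX - 5 * (3 * u - x + 2 * U) * hU
  omega

theorem exists_fib_of_sq_add_four_eq_five_mul_sq {x u : ℕ} (h : x ^ 2 + 4 = 5 * u ^ 2) :
    ∃ j, x = fib (2 * j) + fib (2 * j + 2) ∧ u = fib (2 * j + 1) := by
  induction u using Nat.strong_induction_on generalizing x with
  | _ u ih =>
  rcases lt_or_ge u 2 with hu | hu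
  · interval_cases u
    · omega
    · exact ⟨0, by simpa using h, rfl⟩
  · obtain ⟨X, U, hXU, hUu, hx, hu'⟩ := exists_lt_of_sq_add_four_eq_five_mul_sq h hu
    obtain ⟨j, rfl, rfl⟩ := ih U hUu hXU
    refine ⟨j + 1, ?_, ?_⟩ <;>
    · rw [show 2 * (j + 1) = 2 * j + 2 by ring]
      simp only [fib_add_two] at hx hu' ⊢
      omega

theorem eq_zero_of_sq_add_four_eq_sq {x y : ℕ} (h : x ^ 2 + 4 = y ^ 2) : x = 0 := by
  have hxy : x < y := by nlinarith
  have hx : x ≤ 1 := by nlinarith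
  have hy : y ≤ 2 := by nlinarith
  interval_cases x <;> interval_cases y <;> omega

theorem stmt2_general (x n : ℕ) :
    x ^ 2 + 4 = 5 ^ n ↔ (x = 1 ∧ n = 1) ∨ (x = 11 ∧ n = 3) := by
  refine ⟨fun h ↦ ?_, by rintro (⟨rfl, rfl⟩ | ⟨rfl, rfl⟩) <;> norm_num⟩
  obtain ⟨k, rfl | rfl⟩ := n.even_or_odd'
  · have hx := eq_zero_of_sq_add_four_eq_sq (h.trans (pow_mul' 5 2 k))
    have hodd : Odd (5 ^ (2 * k)) := Odd.pow (by decide)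
    rw [← h, hx] at hodd
    exact absurd hodd (by decide)
  · obtain ⟨j, hx, hu⟩ := exists_fib_of_sq_add_four_eq_five_mul_sq (u := 5 ^ k)
      (by rw [h, pow_succ, pow_mul']; ring)
    rcases eq_one_or_five_of_fib_eq_five_pow (odd_two_mul_add_one j) hu.symm with hj | hj
    · obtain rfl : j = 0 := by omega
      norm_num at hx hu
      exact Or.inl ⟨hx, by omega⟩
    · obtain rfl : j = 2 := by omega
      norm_num [fib_add_two] at hx hu
      obtain rfl := (Nat.pow_eq_self_iff (by norm_num)).1 hu
      exact Or.inr ⟨hx, rfl⟩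

theorem stmt2 (x n : ℕ) (hx : 0 < x) (hn : 0 < n) :
    x ^ 2 + 4 = 5 ^ n ↔ (x = 1 ∧ n = 1) ∨ (x = 11 ∧ n = 3) :=
  stmt2_general x n
end

section
/- The only solutions in positive integers (x, y) of the Diophantine equation 7x² + 25 = 4·2^y are (x, y) = (1, 3) and (x, y) = (17, 9). -/
/-!
Let `θ = (1 + √-7) / 2`, an element of norm `2`. A solution gives the element `(5 + x √-7) / 2`
of norm `2 ^ y` with odd coordinates, and a descent (dividing by `θ` or `θ̄` at each step) shows
that it is `± θ ^ y` or `± θ̄ ^ y`. Hence the Lucas sequence `V n = θ ^ n + θ̄ ^ n` satisfies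
`V y = ± 5`. Modulo `7` the value `5` never occurs and `V y = -5` forces `3 ∣ y`.

With `ω = 2 θ = 1 + √-7`, the equation `V y = -5` reads `Re ω ^ y = -5 · 2 ^ (y - 1)`. Comparing two
such indices `m` and `m + d` and eliminating the real part of `ω ^ d` by its norm `8 ^ d` gives a
polynomial relation between `2 ^ d` and `Im ω ^ d`. Read modulo `49`, it leaves only
`y ≡ 3, 9 (mod 21)`; read `7`-adically (Skolem's method), using `ω ^ 7 ≡ 1 + 7 √-7 (mod 49)`
and `8 = 1 + 7`, it shows that `21 ∣ d` forces `d = 0`.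
-/

section LiftingTheExponent

variable {R : Type*} [CommRing R] {p : ℕ}

theorem exists_one_add_mul_pow_prime_eq (hp : Odd p) (b : R) :
    ∃ c, (1 + p * b) ^ p = 1 + p ^ 2 * b * (1 + p * c) := by
  obtain ⟨c, hc⟩ := odd_sq_dvd_geom_sum₂_sub 1 b hp
  have hgeom := geom_sum₂_mul (1 + (p : R) * b) 1 p
  simp only [one_pow, mul_one] at hc hgeom
  exact ⟨c, by linear_combination -hgeom + p * b * hc⟩

theorem exists_one_add_mul_pow_pow_eq (hp : Odd p) (b : R) (k : ℕ) :
    ∃ c, (1 + p * b) ^ p ^ k = 1 + p ^ (k + 1) * (b + p * c) := by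
  induction k with
  | zero => exact ⟨0, by simp⟩
  | succ k ih =>
    obtain ⟨c, hc⟩ := ih
    obtain ⟨e, he⟩ := exists_one_add_mul_pow_prime_eq hp (p ^ k * (b + p * c))
    refine ⟨c + (b + p * c) * e, ?_⟩
    rw [pow_succ, pow_mul, hc]
    linear_combination he

theorem pow_dvd_one_add_mul_pow_sub (hp : Odd p) (b : R) (k s : ℕ) :
    (p : R) ^ (k + 2) ∣ (1 + p * b) ^ (p ^ k * s) - 1 - p ^ (k + 1) * s * b := by
  obtain ⟨c, hc⟩ := exists_one_add_mul_pow_pow_eq hp b k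
  obtain ⟨t, ht⟩ := sq_dvd_add_pow_sub_sub ((p : R) ^ (k + 1) * (b + p * c)) 1 s
  refine ⟨s * c + p ^ k * (b + p * c) ^ 2 * t, ?_⟩
  rw [pow_mul, hc, add_comm 1]
  simp only [one_pow] at ht
  linear_combination ht

end LiftingTheExponent

namespace RamanujanNagell

open Zsqrtd

-- `(lucasV n + lucasU n * √-7) / 2 = ((1 + √-7) / 2) ^ n`
def lucasV : ℕ → ℤ
  | 0 => 2
  | 1 => 1
  | n + 2 => lucasV (n + 1) - 2 * lucasV n

def lucasU : ℕ → ℤ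
  | 0 => 0
  | 1 => 1
  | n + 2 => lucasU (n + 1) - 2 * lucasU n

theorem two_mul_lucas_succ (n : ℕ) :
    2 * lucasV (n + 1) = lucasV n - 7 * lucasU n ∧ 2 * lucasU (n + 1) = lucasV n + lucasU n := by
  induction n with
  | zero => exact ⟨rfl, rfl⟩
  | succ n ih =>
    rw [lucasV, lucasU]
    constructor <;> linarith [ih.1, ih.2]

theorem odd_lucasV_succ (n : ℕ) : Odd (lucasV (n + 1)) := by
  induction n with
  | zero => exact odd_one
  | succ n ih => rw [lucasV]; exact ih.sub_even (even_two_mul _)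

theorem odd_lucasU_succ (n : ℕ) : Odd (lucasU (n + 1)) := by
  induction n with
  | zero => exact odd_one
  | succ n ih => rw [lucasU]; exact ih.sub_even (even_two_mul _)

-- `a + b √-7 = θ̄ (a' + b' √-7)` or `θ (a' - b' √-7)`, where `θ = (1 + √-7) / 2`
theorem exists_odd_sq_add_seven_mul_sq_eq {n : ℕ} {a b : ℤ} (ha : Odd a) (hb : Odd b)
    (h : a ^ 2 + 7 * b ^ 2 = 2 ^ (n + 4)) :
    ∃ a' b' : ℤ, Odd a' ∧ Odd b' ∧ a' ^ 2 + 7 * b' ^ 2 = 2 ^ (n + 3) ∧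
      2 * a = a' + 7 * b' ∧ (2 * b = a' - b' ∨ 2 * b = b' - a') := by
  wlog h4 : 4 ∣ a - b generalizing b
  · have h4' : 4 ∣ a - -b := by
      obtain ⟨i, hi⟩ := ha
      obtain ⟨j, hj⟩ := hb
      omega
    obtain ⟨a', b', ha', hb', h', h1, h2⟩ := this hb.neg (by linear_combination h) h4'
    exact ⟨a', b', ha', hb', h', h1, h2.symm.imp (by omega) (by omega)⟩
  obtain ⟨c, hc⟩ := h4
  have hc_odd : Odd c := by
    rcases Int.even_or_odd c with ⟨e, rfl⟩ | hc_odd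
    · obtain ⟨j, rfl⟩ := hb
      obtain rfl : a = 2 * j + 1 + 8 * e := by linarith
      have : (8 : ℤ) = 16 * (2 ^ n - 2 * j ^ 2 - 2 * j - (2 * j + 1) * e - 4 * e ^ 2) := by
        linear_combination h
      omega
    · exact hc_odd
  refine ⟨2 * b + c, c, (even_two_mul b).add_odd hc_odd, hc_odd, ?_, by linarith, by left; ring⟩
  apply mul_left_cancel₀ (two_ne_zero : (2 : ℤ) ≠ 0)
  linear_combination h - (a + b + 4 * c) * hc

theorem sq_eq_lucas_sq_of_sq_add_seven_mul_sq_eq {n : ℕ} {a b : ℤ} (ha : Odd a) (hb : Odd b)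
    (h : a ^ 2 + 7 * b ^ 2 = 2 ^ (n + 3)) :
    a ^ 2 = lucasV (n + 1) ^ 2 ∧ b ^ 2 = lucasU (n + 1) ^ 2 := by
  induction n generalizing a b with
  | zero =>
    have ha0 : 0 < a ^ 2 := sq_pos_of_ne_zero (by rintro rfl; exact absurd ha (by decide))
    have hb0 : 0 < b ^ 2 := sq_pos_of_ne_zero (by rintro rfl; exact absurd hb (by decide))
    norm_num at h
    show a ^ 2 = 1 ∧ b ^ 2 = 1
    omega
  | succ n ih =>
    obtain ⟨a', b', ha', hb', h', h1, h2⟩ := exists_odd_sq_add_seven_mul_sq_eq ha hb h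
    obtain ⟨hV, hU⟩ := two_mul_lucas_succ (n + 1)
    obtain ⟨i, hi⟩ := ha
    obtain ⟨j, hj⟩ := odd_lucasV_succ (n + 1)
    obtain ⟨l, hl⟩ := odd_lucasU_succ n
    rcases sq_eq_sq_iff_eq_or_eq_neg.1 (ih ha' hb' h').1 with rfl | rfl <;>
    rcases sq_eq_sq_iff_eq_or_eq_neg.1 (ih ha' hb' h').2 with rfl | rfl <;>
    exact ⟨sq_eq_sq_iff_eq_or_eq_neg.2 (by omega), sq_eq_sq_iff_eq_or_eq_neg.2 (by omega)⟩

def ω : ℤ√(-7) := ⟨1, 1⟩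

theorem norm_ω_pow (n : ℕ) : (ω ^ n).norm = (2 ^ n) ^ 3 := by
  rw [← pow_mul, mul_comm, pow_mul]
  exact map_pow normMonoidHom ω n

theorem ω_pow_zmod_seven (n : ℕ) :
    ((ω ^ n).re : ZMod 7) = 1 ∧ ((ω ^ n).im : ZMod 7) = n := by
  induction n with
  | zero => simp
  | succ n ih =>
    simp only [pow_succ, re_mul, im_mul, Int.cast_add, Int.cast_mul, ih.1, ih.2]
    have h7 : (7 : ZMod 7) = 0 := rfl
    constructor
    · simp [ω, h7]
    · simp [ω, add_comm]

theorem two_mul_ω_pow_re_im (n : ℕ) :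
    2 * (ω ^ n).re = 2 ^ n * lucasV n ∧ 2 * (ω ^ n).im = 2 ^ n * lucasU n := by
  induction n with
  | zero => exact ⟨rfl, rfl⟩
  | succ n ih =>
    obtain ⟨hV, hU⟩ := two_mul_lucas_succ n
    simp only [pow_succ, re_mul, im_mul, show ω.re = 1 from rfl, show ω.im = 1 from rfl]
    constructor
    · linear_combination ih.1 - 7 * ih.2 - 2 ^ n * hV
    · linear_combination ih.1 + ih.2 - 2 ^ n * hU

theorem re_ω_pow_add_eq_of_lucasV_eq {m d : ℕ} (h : lucasV (m + d) = lucasV m) :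
    (ω ^ (m + d)).re = 2 ^ d * (ω ^ m).re := by
  have h1 := (two_mul_ω_pow_re_im (m + d)).1
  have h2 := (two_mul_ω_pow_re_im m).1
  rw [h, pow_add (2 : ℤ)] at h1
  apply mul_left_cancel₀ (two_ne_zero : (2 : ℤ) ≠ 0)
  linear_combination h1 - 2 ^ d * h2

theorem lucasV_zmod_seven (n : ℕ) : (2 : ZMod 7) ^ (n % 3) * lucasV n = 2 := by
  have h := congrArg (Int.cast : ℤ → ZMod 7) (two_mul_ω_pow_re_im n).1
  push_cast [(ω_pow_zmod_seven n).1] at h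
  rw [← pow_eq_pow_mod n (by decide : (2 : ZMod 7) ^ 3 = 1)]
  linear_combination -h

theorem lucasV_ne_five (n : ℕ) : lucasV n ≠ 5 := by
  intro h
  have h7 := lucasV_zmod_seven n
  rw [h] at h7
  push_cast at h7
  exact (by decide : ∀ r : ℕ, r < 3 → (2 : ZMod 7) ^ r * 5 ≠ 2) _ (Nat.mod_lt n (by norm_num)) h7

theorem three_dvd_of_lucasV_eq_neg_five {n : ℕ} (h : lucasV n = -5) : 3 ∣ n := by
  have h7 := lucasV_zmod_seven n
  rw [h] at h7
  push_cast at h7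
  exact Nat.dvd_of_mod_eq_zero ((by decide : ∀ r : ℕ, r < 3 → (2 : ZMod 7) ^ r * -5 = 2 → r = 0)
    _ (Nat.mod_lt n (by norm_num)) h7)

-- `-119 + 64 √-7 ≡ √-7 (mod 7)`
theorem ω_pow_seven : ω ^ 7 = 1 + 7 * ⟨-119, 64⟩ := by ext <;> rfl

theorem seven_pow_dvd_im_ω_pow_sub (k t : ℕ) :
    (7 : ℤ) ^ (k + 2) ∣ (ω ^ (7 ^ (k + 1) * t)).im - 7 ^ (k + 1) * t := by
  have h : ((7 ^ (k + 2) : ℤ) : ℤ√(-7)) ∣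
      ω ^ (7 ^ (k + 1) * t) - (1 + ((7 ^ (k + 1) * t : ℤ) : ℤ√(-7)) * sqrtd) := by
    obtain ⟨c, hc⟩ := pow_dvd_one_add_mul_pow_sub (R := ℤ√(-7)) (by decide : Odd 7) ⟨-119, 64⟩ k t
    have hsq : (⟨-119, 64⟩ : ℤ√(-7)) - sqrtd = 7 * ⟨-17, 9⟩ := by ext <;> rfl
    refine ⟨c + t * ⟨-17, 9⟩, ?_⟩
    rw [pow_succ 7 k, mul_comm _ 7, mul_assoc, pow_mul, ω_pow_seven]
    push_cast at hc ⊢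
    linear_combination hc + 7 ^ (k + 1) * t * hsq
  rw [intCast_dvd] at h
  simpa only [im_sub, im_add, im_one, im_mul, re_intCast, im_intCast, re_sqrtd, im_sqrtd,
    mul_zero, mul_one, zero_mul, add_zero, zero_add] using h.2

theorem sq_mul_sq_mul_sub_one_eq_of_re_mul_eq {z w : ℤ√(-7)} {X : ℤ} (hw : w.norm = X ^ 3)
    (h : (z * w).re = X * z.re) :
    z.re ^ 2 * X ^ 2 * (X - 1) =
      7 * w.im * (2 * z.re * z.im * X + (7 * z.im ^ 2 + z.re ^ 2) * w.im) := by
  rw [norm_def] at hw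
  rw [re_mul] at h
  linear_combination (-z.re ^ 2) * hw + (z.re * w.re + X * z.re + 7 * z.im * w.im) * h

theorem exists_eq_seven_pow_succ_mul_three_mul {d : ℕ} (hd : 21 ∣ d) (hd0 : d ≠ 0) :
    ∃ k s : ℕ, d = 7 ^ (k + 1) * (3 * s) ∧ ¬ 7 ∣ s := by
  obtain ⟨e, s', hs', rfl⟩ := Nat.exists_eq_pow_mul_and_not_dvd hd0 7 (by norm_num)
  obtain ⟨k, rfl⟩ : ∃ k, e = k + 1 := by
    rcases e with _ | k
    · exact absurd (dvd_trans ⟨3, rfl⟩ (by simpa using hd)) hs'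
    · exact ⟨k, rfl⟩
  obtain ⟨s, rfl⟩ : 3 ∣ s' :=
    (Nat.Coprime.pow_left _ (by norm_num : Nat.Coprime 7 3)).symm.dvd_of_dvd_mul_left
      (dvd_trans (by norm_num) hd)
  exact ⟨k, s, rfl, fun h7 => hs' (dvd_mul_of_dvd_right h7 3)⟩

theorem eq_zero_of_re_ω_pow_add_eq {m d : ℕ} (hm : m % 7 ≠ 6) (hd : 21 ∣ d)
    (h : (ω ^ (m + d)).re = 2 ^ d * (ω ^ m).re) : d = 0 := by
  by_contra hd0
  obtain ⟨k, s, rfl, hs⟩ := exists_eq_seven_pow_succ_mul_three_mul hd hd0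
  obtain ⟨c, hc⟩ := pow_dvd_one_add_mul_pow_sub (R := ℤ) (by decide : Odd 7) 1 (k + 1) s
  obtain ⟨w, hw⟩ := seven_pow_dvd_im_ω_pow_sub k (3 * s)
  have hX : (2 : ℤ) ^ (7 ^ (k + 1) * (3 * s)) - 1 = 7 ^ (k + 2) * (s + 7 * c) := by
    rw [mul_left_comm, pow_mul]
    push_cast at hc
    linear_combination hc
  have hv : (ω ^ (7 ^ (k + 1) * (3 * s))).im = 7 ^ (k + 1) * (3 * s + 7 * w) := by
    push_cast at hw
    linear_combination hw
  have hrel := sq_mul_sq_mul_sub_one_eq_of_re_mul_eq (z := ω ^ m)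
    (w := ω ^ (7 ^ (k + 1) * (3 * s))) (X := 2 ^ (7 ^ (k + 1) * (3 * s)))
    (norm_ω_pow _) (by rw [← pow_add, h])
  obtain ⟨hU, hV⟩ := ω_pow_zmod_seven m
  generalize (2 : ℤ) ^ (7 ^ (k + 1) * (3 * s)) = X at hX hrel
  generalize (ω ^ (7 ^ (k + 1) * (3 * s))).im = v at hv hrel
  generalize (ω ^ m).re = U at hU hrel
  generalize (ω ^ m).im = V at hV hrel
  have hE : U ^ 2 * X ^ 2 * (s + 7 * c) =
      (3 * s + 7 * w) * (2 * U * V * X + (7 * V ^ 2 + U ^ 2) * v) := by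
    apply mul_left_cancel₀ (pow_ne_zero (k + 2) (by norm_num : (7 : ℤ) ≠ 0))
    linear_combination
      hrel - U ^ 2 * X ^ 2 * hX + 7 * (2 * U * V * X + (7 * V ^ 2 + U ^ 2) * v) * hv
  obtain ⟨A, rfl⟩ : ∃ A, X = 1 + 7 * A := ⟨7 ^ (k + 1) * (s + 7 * c), by linear_combination hX⟩
  obtain ⟨B, rfl⟩ : ∃ B, v = 7 * B := ⟨7 ^ k * (3 * s + 7 * w), by rw [hv]; ring⟩
  -- modulo `7`, `hE` reads `s = 3 s (2 m)`
  have h7 : (7 : ZMod 7) = 0 := rfl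
  have hE7 := congrArg (Int.cast : ℤ → ZMod 7) hE
  push_cast at hE7
  simp [hU, hV, h7] at hE7
  rcases (by decide : ∀ a b : ZMod 7, a = 3 * a * (2 * b) → a = 0 ∨ b = 6) _ _ hE7 with h0 | h6
  · exact hs ((ZMod.natCast_eq_zero_iff s 7).1 h0)
  · exact hm ((ZMod.val_natCast 7 m).symm.trans (congrArg ZMod.val h6))

theorem mod_twentyOne_of_re_ω_pow_three_add_eq {d : ℕ} (hd : 3 ∣ d)
    (h : (ω ^ (3 + d)).re = 2 ^ d * (ω ^ 3).re) : d % 21 = 0 ∨ d % 21 = 6 := by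
  have hrel := sq_mul_sq_mul_sub_one_eq_of_re_mul_eq (z := ω ^ 3) (w := ω ^ d) (X := 2 ^ d)
    (norm_ω_pow d) (by rw [← pow_add, h])
  rw [show ω ^ 3 = ⟨-20, -4⟩ from rfl] at hrel
  have hv : (7 : ℤ) ∣ d - (ω ^ d).im := by
    have := (ZMod.intCast_eq_intCast_iff_dvd_sub (ω ^ d).im d 7).1
      (by rw [Int.cast_natCast]; exact (ω_pow_zmod_seven d).2)
    exact_mod_cast this
  -- modulo `49`, `Im ω ^ d` only occurs multiplied by `7`, and `2` has order `21`
  have h7v : ((7 * (ω ^ d).im : ℤ) : ZMod 49) = ((7 * (d % 21 : ℕ) : ℤ) : ZMod 49) :=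
    (ZMod.intCast_eq_intCast_iff_dvd_sub _ _ 49).2 (by omega)
  have hE := congrArg (Int.cast : ℤ → ZMod 49) hrel
  push_cast at hE
  simp only [Int.cast_mul, Int.cast_ofNat, Int.cast_natCast] at h7v
  rw [pow_eq_pow_mod d (by decide : (2 : ZMod 49) ^ 21 = 1)] at hE
  set r := d % 21
  have hr : (400 : ZMod 49) * (2 ^ r) ^ 2 * (2 ^ r - 1) = 7 * r * (160 * 2 ^ r + 512 * r) := by
    linear_combination hE + (160 * 2 ^ r + 512 * ((ω ^ d).im + r)) * h7v
  exact (by decide : ∀ r : ℕ, r < 21 → 3 ∣ r →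
      (400 : ZMod 49) * (2 ^ r) ^ 2 * (2 ^ r - 1) = 7 * (r : ZMod 49) * (160 * 2 ^ r + 512 * r) →
        r = 0 ∨ r = 6) r (Nat.mod_lt d (by norm_num)) (by omega) hr

theorem eq_three_or_nine_of_lucasV_eq_neg_five {n : ℕ} (h : lucasV n = -5) : n = 3 ∨ n = 9 := by
  have h3 := three_dvd_of_lucasV_eq_neg_five h
  obtain ⟨d, rfl⟩ : ∃ d, n = 3 + d := by
    refine ⟨n - 3, ?_⟩
    rcases n with _ | n
    · exact absurd h (by decide)
    · omega
  have hd := re_ω_pow_add_eq_of_lucasV_eq (h.trans (by decide : lucasV 3 = -5).symm)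
  rcases mod_twentyOne_of_re_ω_pow_three_add_eq (by omega) hd with h0 | h6
  · have := eq_zero_of_re_ω_pow_add_eq (by norm_num) (by omega) hd
    omega
  · obtain ⟨e, rfl⟩ : ∃ e, d = 6 + e := ⟨d - 6, by omega⟩
    rw [← add_assoc] at h
    have := eq_zero_of_re_ω_pow_add_eq (m := 9) (by norm_num) (by omega)
      (re_ω_pow_add_eq_of_lucasV_eq (h.trans (by decide : lucasV 9 = -5).symm))
    omega

end RamanujanNagell

open RamanujanNagell in
theorem stmt3_general (x y : ℕ) :
    7 * x ^ 2 + 25 = 4 * 2 ^ y ↔ (x = 1 ∧ y = 3) ∨ (x = 17 ∧ y = 9) := by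
  refine ⟨fun h => ?_, by rintro (⟨rfl, rfl⟩ | ⟨rfl, rfl⟩) <;> norm_num⟩
  obtain _ | n := y
  · omega
  have hx : Odd x := by
    rcases Nat.even_or_odd x with ⟨t, rfl⟩ | hx
    · ring_nf at h
      omega
    · exact hx
  have hrep : (5 : ℤ) ^ 2 + 7 * (x : ℤ) ^ 2 = 2 ^ (n + 3) := by
    have := congrArg (Nat.cast : ℕ → ℤ) h
    push_cast at this
    linear_combination this
  rcases sq_eq_sq_iff_eq_or_eq_neg.1
    (sq_eq_lucas_sq_of_sq_add_seven_mul_sq_eq (by decide) hx.natCast hrep).1.symm with h5 | h5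
  · exact absurd h5 (lucasV_ne_five _)
  rcases eq_three_or_nine_of_lucasV_eq_neg_five h5 with hn | hn
  · have hx2 : x ^ 2 = 1 ^ 2 := by rw [hn] at h; omega
    exact Or.inl ⟨Nat.pow_left_injective two_ne_zero hx2, hn⟩
  · have hx2 : x ^ 2 = 17 ^ 2 := by rw [hn] at h; omega
    exact Or.inr ⟨Nat.pow_left_injective two_ne_zero hx2, hn⟩

theorem stmt3 (x y : ℕ) (hx : 0 < x) (hy : 0 < y) :
    7 * x ^ 2 + 25 = 4 * 2 ^ y ↔ (x = 1 ∧ y = 3) ∨ (x = 17 ∧ y = 9) :=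
  stmt3_general x y
end

section
/- Let p be an odd prime and c a positive integer such that there exist positive integers x, n with c·x² + p − 1 = pⁿ. Then c + p is not congruent to 1 modulo 4. -/
/-! Since `p` and `pⁿ` are odd, `c·x² = pⁿ + 1 − p` is odd, so `x` is odd and `c·x² ≡ c (mod 4)`.
Hence `c + p ≡ c·x² + p = pⁿ + 1 (mod 4)`, which is even. -/

theorem Nat.sq_mod_four_eq_one_of_odd {x : ℕ} (hx : Odd x) : x ^ 2 % 4 = 1 := by
  have := Int.sq_mod_four_eq_one_of_odd ((Int.odd_coe_nat x).mpr hx)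
  exact_mod_cast this

theorem Nat.mul_sq_mod_four_of_odd (c : ℕ) {x : ℕ} (hx : Odd x) : c * x ^ 2 % 4 = c % 4 := by
  rw [Nat.mul_mod, Nat.sq_mod_four_eq_one_of_odd hx, mul_one, Nat.mod_mod]

theorem Nat.odd_of_add_eq_pow_add_one {m p n : ℕ} (hp : Odd p) (h : m + p = p ^ n + 1) :
    Odd m := by
  have heven : Even (m + p) := h ▸ hp.pow.add_one
  exact Nat.not_even_iff_odd.mp fun he ↦
    Nat.not_even_iff_odd.mpr hp ((Nat.even_add.mp heven).mp he)

theorem stmt7_general (p c : ℕ) (hodd : Odd p)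
    (h : ∃ x n : ℕ, 0 < x ∧ 0 < n ∧ c * x ^ 2 + p - 1 = p ^ n) :
    ¬ (c + p) % 4 = 1 := by
  obtain ⟨x, n, -, -, heq⟩ := h
  have hsum : c * x ^ 2 + p = p ^ n + 1 := by have := hodd.pos; omega
  have hx : Odd x := (Nat.odd_pow_iff two_ne_zero).mp
    (Nat.Odd.of_mul_right (Nat.odd_of_add_eq_pow_add_one hodd hsum))
  have hcx := Nat.mul_sq_mod_four_of_odd c hx
  have hpn : p ^ n % 2 = 1 := Nat.odd_iff.mp hodd.pow
  omega

theorem stmt7 (p c : ℕ) (hp : p.Prime) (hodd : Odd p) (hc : 0 < c)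
    (h : ∃ x n : ℕ, 0 < x ∧ 0 < n ∧ c * x ^ 2 + p - 1 = p ^ n) :
    ¬ (c + p) % 4 = 1 :=
  stmt7_general p c hodd h
end

section
/- Let p be an odd prime and c, s, r positive integers satisfying both c·s² + p − 1 = p^r and 3·c·s² = p − 2. Then p = 5, r = 1, c = 1, and s = 1. -/
/-! Writing `X = c * s ^ 2`, the hypotheses say `p = 3 X + 2` and `p ^ r = 4 X + 1`. Since
`4 X + 1 < (3 X + 2) ^ 2`, the exponent is `0` or `1`, and with `X > 0` only `r = 1`, `X = 1` fits. -/

lemma eq_one_of_three_mul_add_two_pow_eq {X p r : ℕ} (hX : 0 < X) (hp : p = 3 * X + 2)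
    (hpow : p ^ r = 4 * X + 1) : X = 1 ∧ r = 1 := by
  have hr : r < 2 := by
    refine (Nat.pow_lt_pow_iff_right (show 1 < p by omega)).1 ?_
    rw [hpow, hp]
    nlinarith
  interval_cases r <;> simp only [pow_zero, pow_one] at hpow <;> omega

theorem stmt10_general (p c s r : ℕ) (hc : 0 < c) (hs : 0 < s)
    (h1 : c * s ^ 2 + p - 1 = p ^ r) (h2 : 3 * c * s ^ 2 = p - 2) :
    p = 5 ∧ r = 1 ∧ c = 1 ∧ s = 1 := by
  have hX : 0 < c * s ^ 2 := by positivity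
  rw [mul_assoc] at h2
  obtain ⟨hX1, rfl⟩ := eq_one_of_three_mul_add_two_pow_eq (p := p) (r := r) hX (by omega) (by omega)
  obtain ⟨rfl, hs1⟩ := mul_eq_one.1 hX1
  exact ⟨by omega, rfl, rfl, by simpa using hs1⟩

theorem stmt10 (p c s r : ℕ) (hp : p.Prime) (hodd : Odd p) (hc : 0 < c) (hs : 0 < s)
    (hr : 0 < r) (h1 : c * s ^ 2 + p - 1 = p ^ r) (h2 : 3 * c * s ^ 2 = p - 2) :
    p = 5 ∧ r = 1 ∧ c = 1 ∧ s = 1 :=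
  stmt10_general p c s r hc hs h1 h2
end

section
/- The only generalized Mersenne numbers M_{5,n} = 5ⁿ − 4 (n a positive integer) that are perfect squares are 1 and 121, attained at n = 1 and n = 3. -/
/-!
Write `5 ^ n - 4 = r ^ 2`. For even `n` this is impossible modulo `8`, since then `5 ^ n ≡ 1`.
For `n = 2m + 1` we get `r ^ 2 + 4 = 5 y ^ 2` with `y = 5 ^ m`. Descent by the unit
`(3 - √5) / 2` shows that every solution of `x ^ 2 + 4 = 5 y ^ 2` has `y` a Fibonacci number.
Since `25 ∣ fib j` forces `25 ∣ j`, hence `fib 25 = 5 ^ 2 * 3001 ∣ fib j`, the only Fibonacci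
numbers that are powers of `5` are `1` and `5`, so `m ≤ 1`.
-/

open Nat

/-- `z` is the rank of apparition of `d` in the Fibonacci sequence, so `d ∣ fib j` forces `z ∣ j`. -/
theorem dvd_of_dvd_fib_of_forall_lt {d z j : ℕ} (hz : 0 < z) (hdz : d ∣ fib z)
    (hmin : ∀ i < z, 0 < i → ¬ d ∣ fib i) (hdj : d ∣ fib j) : z ∣ j := by
  have hgcd : d ∣ fib (Nat.gcd j z) := by
    rw [fib_gcd]
    exact Nat.dvd_gcd hdj hdz
  have hpos : 0 < Nat.gcd j z := Nat.gcd_pos_of_pos_right j hz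
  have hle : Nat.gcd j z ≤ z := Nat.le_of_dvd hz (Nat.gcd_dvd_right j z)
  have heq : Nat.gcd j z = z := by
    by_contra hne
    exact hmin _ (lt_of_le_of_ne hle hne) hpos hgcd
  exact heq ▸ Nat.gcd_dvd_left j z

theorem twentyFive_dvd_of_dvd_fib {j : ℕ} (h : 25 ∣ fib j) : 25 ∣ j :=
  dvd_of_dvd_fib_of_forall_lt (by norm_num) (by decide) (by decide) h

theorem le_one_of_fib_eq_five_pow {j m : ℕ} (h : fib j = 5 ^ m) : m ≤ 1 := by
  by_contra! hm
  have h25 : 25 ∣ fib j := h ▸ pow_dvd_pow 5 hm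
  have hfib : fib 25 ∣ 5 ^ m := h ▸ fib_dvd _ _ (twentyFive_dvd_of_dvd_fib h25)
  have h3001 : 3001 ∣ 5 ^ m := dvd_trans ⟨25, by norm_num [fib]⟩ hfib
  have hp : Nat.Prime 3001 := by norm_num
  have := (Nat.prime_dvd_prime_iff_eq hp Nat.prime_five).1 (hp.dvd_of_dvd_pow h3001)
  omega

/-- A solution with `y ≥ 2` is the image of a smaller one under multiplication by `(3 + √5) / 2`. -/
theorem exists_lt_of_mul_self_add_four_eq {x y : ℕ} (h : x * x + 4 = 5 * (y * y)) (hy : 2 ≤ y) :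
    ∃ x' y', x' * x' + 4 = 5 * (y' * y') ∧ y' < y ∧ 2 * x = 3 * x' + 5 * y' ∧
      2 * y = x' + 3 * y' := by
  have hxy : y < x := by nlinarith
  have hx3y : x < 3 * y := by nlinarith
  have h5y : 5 * y < 3 * x := by nlinarith
  have hpar : x % 2 = y % 2 := by
    have : Even (x * x + 4) ↔ Even (5 * (y * y)) := by rw [h]
    rw [Nat.even_add, Nat.even_mul, Nat.even_mul, Nat.even_mul] at this
    simp only [or_self, show Even 4 by decide, show ¬Even 5 by decide, iff_true, false_or,
      Nat.even_iff] at this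
    omega
  obtain ⟨x', hx'⟩ : ∃ x', 3 * x = 5 * y + 2 * x' := ⟨(3 * x - 5 * y) / 2, by omega⟩
  obtain ⟨y', hy'⟩ : ∃ y', 3 * y = x + 2 * y' := ⟨(3 * y - x) / 2, by omega⟩
  refine ⟨x', y', ?_, by omega, by omega, by omega⟩
  have h4 : ((x' : ℤ) * x' + 4) * 4 = 5 * (y' * y') * 4 := by
    have hZ : (x : ℤ) * x + 4 = 5 * (y * y) := by exact_mod_cast h
    have hx'Z : 3 * (x : ℤ) = 5 * y + 2 * x' := by exact_mod_cast hx'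
    have hy'Z : 3 * (y : ℤ) = x + 2 * y' := by exact_mod_cast hy'
    linear_combination (-(3 * (x : ℤ) - 5 * y + 2 * x')) * hx'Z +
      (5 * (3 * (y : ℤ) - x + 2 * y')) * hy'Z + 4 * hZ
  exact_mod_cast mul_right_cancel₀ (by norm_num) h4

/-- The second conjunct says that `x` is the Lucas number `L (2k+1)`, as `L n + F n = 2 F (n+1)`. -/
theorem exists_fib_of_mul_self_add_four_eq {x y : ℕ} (h : x * x + 4 = 5 * (y * y)) :
    ∃ k, y = fib (2 * k + 1) ∧ x + y = 2 * fib (2 * k + 2) := by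
  induction y using Nat.strong_induction_on generalizing x with
  | _ y ih =>
    rcases Nat.lt_or_ge y 2 with hy | hy
    · interval_cases y
      · omega
      · have hx : x = 1 := by nlinarith
        exact ⟨0, by simp [hx, fib_add_two]⟩
    · obtain ⟨x', y', h', hlt, hx, hy⟩ := exists_lt_of_mul_self_add_four_eq h hy
      obtain ⟨k, hk, hxk⟩ := ih y' hlt h'
      have f2 := fib_add_two (n := 2 * k + 1)
      have f3 := fib_add_two (n := 2 * k + 2)
      refine ⟨k + 1, ?_, ?_⟩ <;>
      · ring_nf at f2 f3 hk hxk ⊢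
        omega

theorem odd_of_mul_self_add_four_eq_five_pow {r n : ℕ} (h : r * r + 4 = 5 ^ n) : Odd n := by
  by_contra hn
  obtain ⟨m, rfl⟩ := Nat.not_odd_iff_even.1 hn
  have h8 := congrArg (Nat.cast : ℕ → ZMod 8) h
  push_cast at h8
  rw [← two_mul, pow_mul, show (5 : ZMod 8) ^ 2 = 1 by decide, one_pow] at h8
  generalize (r : ZMod 8) = a at h8
  revert a
  decide

theorem stmt12 (n : ℕ) (hn : 0 < n) :
    IsSquare (5 ^ n - 4) ↔ n = 1 ∨ n = 3 := by
  constructor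
  · rintro ⟨r, hr⟩
    have hr' : r * r + 4 = 5 ^ n := by
      have : 5 ≤ 5 ^ n := Nat.le_self_pow hn.ne' 5
      omega
    obtain ⟨m, rfl⟩ := odd_of_mul_self_add_four_eq_five_pow hr'
    rw [show 5 ^ (2 * m + 1) = 5 * (5 ^ m * 5 ^ m) by ring] at hr'
    obtain ⟨k, hk, -⟩ := exists_fib_of_mul_self_add_four_eq hr'
    have hm : m ≤ 1 := le_one_of_fib_eq_five_pow hk.symm
    interval_cases m <;> simp
  · rintro (rfl | rfl)
    exacts [⟨1, rfl⟩, ⟨11, rfl⟩]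
end
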